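/- arXiv:1205.1345 — 2 statements merged into one kernel-verified Lean document; each statement's English description precedes it below -/
import Mathlib

section
/- Let E be a real Hilbert space, A bounded self-adjoint positive semidefinite with kernel E_∞, P the orthogonal projection onto E_∞, and k : E → E a bounded map satisfying: whenever λₙ → ∞ and (uₙ) with sup‖uₙ‖_{λₙ} < ∞ converges weakly to u, then k(uₙ) → k(u) strongly. Fix u_∞ ∈ E_∞ and δ > 0, let k_∞ := Pk|_{E_∞}, and let k_λ be the ⟨·,·⟩_λ-gradient representative of k. Then for every ε > 0 there exists Λ > 0 such that for all λ ≥ Λ, sup over all u with ‖u − u_∞‖_λ ≤ δ of ‖k_λ(u) − k_∞(Pu)‖_λ is at most ε. -/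
open scoped InnerProductSpace
open Filter

section Aux
variable {E : Type*} [NormedAddCommGroup E] [InnerProductSpace ℝ E]

/-- Cauchy-Schwarz-type kernel lemma for a positive semidefinite symmetric operator. -/
lemma aux_ker_of_inner_zero (A : E →L[ℝ] E)
    (hA_sa : ∀ u v : E, ⟪A u, v⟫_ℝ = ⟪u, A v⟫_ℝ)
    (hA_pos : ∀ u : E, 0 ≤ ⟪A u, u⟫_ℝ)
    (v : E) (hv : ⟪A v, v⟫_ℝ = 0) : A v = 0 := by
  set q : ℝ := ⟪A (A v), A v⟫_ℝ with hqdef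
  set c : ℝ := ⟪A v, A v⟫_ℝ with hcdef
  have key : ∀ t : ℝ, 0 ≤ t ^ 2 * q + 2 * t * c := by
    intro t
    have h0 := hA_pos (v + t • A v)
    have e2 : ⟪A (A v), v⟫_ℝ = c := by
      rw [hA_sa (A v) v, hcdef]
    have e1 : ⟪A (v + t • A v), v + t • A v⟫_ℝ
        = ⟪A v, v⟫_ℝ + t * c + t * ⟪A (A v), v⟫_ℝ + t ^ 2 * q := by
      simp only [map_add, map_smul, inner_add_left, inner_add_right,
        real_inner_smul_left, real_inner_smul_right, hqdef, hcdef]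
      try ring
    rw [e1, e2, hv] at h0
    linarith
  have hq : 0 ≤ q := hA_pos (A v)
  have hc0 : c = 0 := by
    have hq1 : (0 : ℝ) < q + 1 := by linarith
    set r : ℝ := c / (q + 1) with hrdef
    have hcr : c = r * (q + 1) := by rw [hrdef, div_mul_cancel₀ _ hq1.ne']
    have h := key (-r)
    have h2 : r ^ 2 * (q + 2) ≤ 0 := by rw [hcr] at h; nlinarith [h]
    have h3 : r ^ 2 = 0 := by nlinarith [sq_nonneg r]
    have : r = 0 := pow_eq_zero_iff (n := 2) (by norm_num) |>.1 h3
    rw [hcr, this]; ring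
  have : ⟪A v, A v⟫_ℝ = 0 := hc0
  exact inner_self_eq_zero.1 this

/-- Weak lower semicontinuity: if `⟪A dₙ, dₙ⟫ → 0` and `dₙ ⇀ dl` then `A dl = 0`. -/
lemma aux_wlsc (A : E →L[ℝ] E)
    (hA_sa : ∀ u v : E, ⟪A u, v⟫_ℝ = ⟪u, A v⟫_ℝ)
    (hA_pos : ∀ u : E, 0 ≤ ⟪A u, u⟫_ℝ)
    (d : ℕ → E) (dl : E)
    (hW : ∀ w : E, Tendsto (fun n => ⟪d n, w⟫_ℝ) atTop (nhds ⟪dl, w⟫_ℝ))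
    (h0 : Tendsto (fun n => ⟪A (d n), d n⟫_ℝ) atTop (nhds 0)) :
    A dl = 0 := by
  have hexp : ∀ n, 2 * ⟪d n, A dl⟫_ℝ - ⟪A dl, dl⟫_ℝ ≤ ⟪A (d n), d n⟫_ℝ := by
    intro n
    have h0' := hA_pos (d n - dl)
    have e : ⟪A (d n - dl), d n - dl⟫_ℝ
        = ⟪A (d n), d n⟫_ℝ - 2 * ⟪d n, A dl⟫_ℝ + ⟪A dl, dl⟫_ℝ := by
      rw [map_sub, inner_sub_left, inner_sub_right, inner_sub_right,
        hA_sa (d n) dl, real_inner_comm (A dl) (d n)]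
      ring
    rw [e] at h0'
    linarith
  have hL : Tendsto (fun n => 2 * ⟪d n, A dl⟫_ℝ - ⟪A dl, dl⟫_ℝ) atTop
      (nhds (2 * ⟪dl, A dl⟫_ℝ - ⟪A dl, dl⟫_ℝ)) :=
    ((hW (A dl)).const_mul 2).sub_const _
  have hle : 2 * ⟪dl, A dl⟫_ℝ - ⟪A dl, dl⟫_ℝ ≤ 0 :=
    le_of_tendsto_of_tendsto' hL h0 hexp
  have hc := real_inner_comm dl (A dl)
  have h2 : ⟪A dl, dl⟫_ℝ ≤ 0 := by linarith
  exact aux_ker_of_inner_zero A hA_sa hA_pos dl (le_antisymm h2 (hA_pos dl))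

/-- Strong-weak convergence of inner products. -/
lemma aux_inner_tendsto (a b : ℕ → E) (a₀ b₀ : E) (M : ℝ)
    (hM : ∀ n, ‖b n‖ ≤ M)
    (ha : Tendsto a atTop (nhds a₀))
    (hb : ∀ w : E, Tendsto (fun n => ⟪b n, w⟫_ℝ) atTop (nhds ⟪b₀, w⟫_ℝ)) :
    Tendsto (fun n => ⟪a n, b n⟫_ℝ) atTop (nhds ⟪a₀, b₀⟫_ℝ) := by
  have h1 : Tendsto (fun n => ⟪a n - a₀, b n⟫_ℝ) atTop (nhds 0) := by
    have hg : Tendsto (fun n => ‖a n - a₀‖ * M) atTop (nhds 0) := by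
      have h' : Tendsto (fun n => ‖a n - a₀‖) atTop (nhds 0) := by
        simpa using (ha.sub (tendsto_const_nhds (x := a₀))).norm
      simpa using h'.mul_const M
    refine squeeze_zero_norm (fun n => ?_) hg
    exact le_trans (abs_real_inner_le_norm _ _)
      (mul_le_mul_of_nonneg_left (hM n) (norm_nonneg _))
  have h2 := hb a₀
  have hsum := h1.add h2
  have e : (fun n => ⟪a n - a₀, b n⟫_ℝ + ⟪b n, a₀⟫_ℝ) = fun n => ⟪a n, b n⟫_ℝ := by
    funext n
    rw [inner_sub_left, real_inner_comm (b n) a₀]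
    ring
  rw [e] at hsum
  have e2 : (0 : ℝ) + ⟪b₀, a₀⟫_ℝ = ⟪a₀, b₀⟫_ℝ := by rw [zero_add, real_inner_comm]
  rwa [e2] at hsum

end Aux
/-- Weak sequential compactness of bounded sequences in a real Hilbert space. -/
lemma aux_weak_bw {E : Type*} [NormedAddCommGroup E] [InnerProductSpace ℝ E] [CompleteSpace E]
    (x : ℕ → E) (C : ℝ) (hx : ∀ n, ‖x n‖ ≤ C) :
    ∃ φ : ℕ → ℕ, StrictMono φ ∧ ∃ x₀ : E,
      ∀ w : E, Tendsto (fun n => ⟪x (φ n), w⟫_ℝ) atTop (nhds ⟪x₀, w⟫_ℝ) := by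
  have hC : 0 ≤ C := le_trans (norm_nonneg _) (hx 0)
  -- Step 1: diagonal-type extraction via compactness of a product of intervals
  have hScomp : IsCompact (Set.univ.pi fun _ : ℕ => Set.Icc (-(C * C)) (C * C)) :=
    isCompact_univ_pi fun _ => isCompact_Icc
  have hmem : ∀ n, (fun m => ⟪x n, x m⟫_ℝ) ∈
      (Set.univ.pi fun _ : ℕ => Set.Icc (-(C * C)) (C * C)) := by
    intro n
    rw [Set.mem_univ_pi]
    intro m
    have h1 : |⟪x n, x m⟫_ℝ| ≤ C * C := by
      refine le_trans (abs_real_inner_le_norm _ _) ?_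
      exact mul_le_mul (hx n) (hx m) (norm_nonneg _) hC
    exact ⟨neg_le_of_abs_le h1, le_of_abs_le h1⟩
  obtain ⟨g, -, φ, hφ, hconv⟩ := hScomp.isSeqCompact hmem
  have hconv' : ∀ m, Tendsto (fun n => ⟪x (φ n), x m⟫_ℝ) atTop (nhds (g m)) := by
    intro m
    exact (tendsto_pi_nhds.1 hconv) m
  -- the set of good test vectors
  set D : E → Prop := fun w => ∃ r : ℝ, Tendsto (fun n => ⟪x (φ n), w⟫_ℝ) atTop (nhds r)
    with hDdef
  have hDx : ∀ m, D (x m) := fun m => ⟨g m, hconv' m⟩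
  have hDspan : ∀ w ∈ Submodule.span ℝ (Set.range x), D w := by
    intro w hw
    induction hw using Submodule.span_induction with
    | mem w hw => obtain ⟨m, rfl⟩ := hw; exact hDx m
    | zero => exact ⟨0, by simp⟩
    | add a b _ _ ha hb =>
        obtain ⟨r, hr⟩ := ha; obtain ⟨s, hs⟩ := hb
        exact ⟨r + s, by simpa [inner_add_right] using hr.add hs⟩
    | smul t a _ ha =>
        obtain ⟨r, hr⟩ := ha
        exact ⟨t * r, by simpa [real_inner_smul_right] using hr.const_mul t⟩
  -- closure of the span
  have hDclos : ∀ w ∈ closure ((Submodule.span ℝ (Set.range x) : Submodule ℝ E) : Set E),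
      D w := by
    intro w hw
    have hcauchy : CauchySeq (fun n => ⟪x (φ n), w⟫_ℝ) := by
      rw [Metric.cauchySeq_iff]
      intro ε hε
      obtain ⟨w', hw'S, hww'⟩ := Metric.mem_closure_iff.1 hw (ε / (3 * (C + 1))) (by positivity)
      obtain ⟨r, hr⟩ := hDspan w' hw'S
      obtain ⟨N, hN⟩ := Metric.cauchySeq_iff.1 hr.cauchySeq (ε / 3) (by positivity)
      refine ⟨N, fun m hm n hn => ?_⟩
      have hd : ‖w - w'‖ < ε / (3 * (C + 1)) := by rwa [← dist_eq_norm]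
      have key : ⟪x (φ m), w⟫_ℝ - ⟪x (φ n), w⟫_ℝ
          = ⟪x (φ m), w - w'⟫_ℝ + (⟪x (φ m), w'⟫_ℝ - ⟪x (φ n), w'⟫_ℝ)
            + ⟪x (φ n), w' - w⟫_ℝ := by
        simp only [inner_sub_right]; ring
      have b1 : |⟪x (φ m), w - w'⟫_ℝ| ≤ C * ‖w - w'‖ :=
        le_trans (abs_real_inner_le_norm _ _)
          (mul_le_mul_of_nonneg_right (hx _) (norm_nonneg _))
      have b3 : |⟪x (φ n), w' - w⟫_ℝ| ≤ C * ‖w - w'‖ := by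
        rw [norm_sub_rev w w']
        exact le_trans (abs_real_inner_le_norm _ _)
          (mul_le_mul_of_nonneg_right (hx _) (norm_nonneg _))
      have b2 : |⟪x (φ m), w'⟫_ℝ - ⟪x (φ n), w'⟫_ℝ| < ε / 3 := by
        have := hN m hm n hn
        rwa [Real.dist_eq] at this
      have hCd : C * ‖w - w'‖ < ε / 3 := by
        have h1 : C * ‖w - w'‖ ≤ C * (ε / (3 * (C + 1))) := by
          apply mul_le_mul_of_nonneg_left hd.le hC
        have h2 : C * (ε / (3 * (C + 1))) < ε / 3 := by
          have e : C * (ε / (3 * (C + 1))) = (C / (C + 1)) * (ε / 3) := by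
            field_simp
            try ring_nf
            try tauto
          rw [e]
          have hlt : C / (C + 1) < 1 := (div_lt_one (by linarith)).2 (by linarith)
          calc (C / (C + 1)) * (ε / 3) < 1 * (ε / 3) :=
                mul_lt_mul_of_pos_right hlt (by positivity)
            _ = ε / 3 := one_mul _
        linarith
      rw [Real.dist_eq, key]
      calc |⟪x (φ m), w - w'⟫_ℝ + (⟪x (φ m), w'⟫_ℝ - ⟪x (φ n), w'⟫_ℝ) + ⟪x (φ n), w' - w⟫_ℝ|
          ≤ |⟪x (φ m), w - w'⟫_ℝ| + |⟪x (φ m), w'⟫_ℝ - ⟪x (φ n), w'⟫_ℝ|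
            + |⟪x (φ n), w' - w⟫_ℝ| := abs_add_three _ _ _
        _ < ε := by linarith
    exact cauchySeq_tendsto_of_complete hcauchy
  -- all test vectors, via orthogonal projection
  have hall : ∀ w : E, D w := by
    intro w
    set V := (Submodule.span ℝ (Set.range x)).topologicalClosure with hV
    have hxV : ∀ n, x n ∈ V := fun n =>
      Submodule.le_topologicalClosure _ (Submodule.subset_span (Set.mem_range_self n))
    haveI : CompleteSpace V := (Submodule.isClosed_topologicalClosure _).completeSpace_coe
    set p : E := (V.orthogonalProjectionOnto w : E) with hp
    have hpV : p ∈ V := (V.orthogonalProjectionOnto w).2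
    have hpc : p ∈ closure ((Submodule.span ℝ (Set.range x) : Submodule ℝ E) : Set E) := by
      rwa [← Submodule.topologicalClosure_coe]
    have hperp : w - p ∈ Vᗮ := Submodule.sub_starProjection_mem_orthogonal (K := V) w
    have hzero : ∀ n, ⟪x n, w - p⟫_ℝ = 0 := fun n =>
      (Submodule.mem_orthogonal _ _).1 hperp _ (hxV n)
    obtain ⟨r, hr⟩ := hDclos p hpc
    refine ⟨r, hr.congr fun n => ?_⟩
    have h := hzero (φ n)
    rw [inner_sub_right] at h
    linarith
  choose F hF using hall
  have hFadd : ∀ a b : E, F (a + b) = F a + F b := by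
    intro a b
    refine tendsto_nhds_unique (hF (a + b)) ?_
    simpa [inner_add_right] using (hF a).add (hF b)
  have hFsmul : ∀ (t : ℝ) (a : E), F (t • a) = t * F a := by
    intro t a
    refine tendsto_nhds_unique (hF (t • a)) ?_
    simpa [real_inner_smul_right] using (hF a).const_mul t
  let L : E →ₗ[ℝ] ℝ :=
    { toFun := F
      map_add' := hFadd
      map_smul' := hFsmul }
  have hLbound : ∀ w : E, ‖L w‖ ≤ C * ‖w‖ := by
    intro w
    have habs : Tendsto (fun n => |⟪x (φ n), w⟫_ℝ|) atTop (nhds |F w|) := (hF w).abs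
    have : |F w| ≤ C * ‖w‖ := by
      refine le_of_tendsto habs (Eventually.of_forall fun n => ?_)
      exact le_trans (abs_real_inner_le_norm _ _)
        (mul_le_mul_of_nonneg_right (hx _) (norm_nonneg _))
    rw [Real.norm_eq_abs]; exact this
  let L' : E →L[ℝ] ℝ := L.mkContinuous C hLbound
  refine ⟨φ, hφ, (InnerProductSpace.toDual ℝ E).symm L', fun w => ?_⟩
  rw [InnerProductSpace.toDual_symm_apply]
  exact hF w

/-- Lemma 4.1 of the paper: under condition (J₃) on `k`, for every `ε > 0` there is
`Λ > 0` such that `‖k_λ(u) − k_∞(Pu)‖_λ ≤ ε` for all `λ ≥ Λ` and all `u` with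
`‖u − u_∞‖_λ ≤ δ`, where `k_∞ = P∘k` on `E_∞ = ker A` and `k_λ` is the `⟨·,·⟩_λ`-gradient
representative of `k`. -/
theorem stmt_18 {E : Type*} [NormedAddCommGroup E] [InnerProductSpace ℝ E] [CompleteSpace E]
    (A : E →L[ℝ] E)
    (hA_sa : ∀ u v : E, ⟪A u, v⟫_ℝ = ⟪u, A v⟫_ℝ)
    (hA_pos : ∀ u : E, 0 ≤ ⟪A u, u⟫_ℝ)
    (K : Submodule ℝ E) (hKer : ∀ v : E, v ∈ K ↔ A v = 0)
    (P : E →L[ℝ] E)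
    (hP_mem : ∀ u : E, P u ∈ K)
    (hP_id : ∀ u ∈ K, P u = u)
    (hP_sa : ∀ u v : E, ⟪P u, v⟫_ℝ = ⟪u, P v⟫_ℝ)
    (k : E → E)
    (hk_bdd : ∀ s : Set E, Bornology.IsBounded s → Bornology.IsBounded (k '' s))
    -- condition (J₃)
    (hJ3 : ∀ (lam : ℕ → ℝ) (v : ℕ → E) (v₀ : E) (Cb : ℝ),
      Tendsto lam atTop atTop →
      (∀ n, Real.sqrt (‖v n‖ ^ 2 + lam n * ⟪A (v n), v n⟫_ℝ) ≤ Cb) →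
      (∀ w : E, Tendsto (fun n => ⟪v n, w⟫_ℝ) atTop (nhds ⟪v₀, w⟫_ℝ)) →
      Tendsto (fun n => k (v n)) atTop (nhds (k v₀)))
    (klam : ℝ → E → E)
    (hrep : ∀ l : ℝ, 0 ≤ l → ∀ u v : E,
      ⟪klam l u, v⟫_ℝ + l * ⟪A (klam l u), v⟫_ℝ = ⟪k u, v⟫_ℝ)
    (ulim : E) (hulim : ulim ∈ K) (δ : ℝ) (hδ : 0 < δ) :
    ∀ ε > 0, ∃ Λ > 0, ∀ l ≥ Λ, ∀ u : E,
      Real.sqrt (‖u - ulim‖ ^ 2 + l * ⟪A (u - ulim), u - ulim⟫_ℝ) ≤ δ →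
      Real.sqrt (‖klam l u - P (k (P u))‖ ^ 2 +
          l * ⟪A (klam l u - P (k (P u))), klam l u - P (k (P u))⟫_ℝ) ≤ ε := by
  intro ε hε
  by_contra hcon
  push_neg at hcon
  -- extract a "bad" sequence
  have H : ∀ n : ℕ, ∃ l : ℝ, ((n : ℝ) + 1 ≤ l) ∧ ∃ u : E,
      Real.sqrt (‖u - ulim‖ ^ 2 + l * ⟪A (u - ulim), u - ulim⟫_ℝ) ≤ δ ∧
      ε < Real.sqrt (‖klam l u - P (k (P u))‖ ^ 2 +
          l * ⟪A (klam l u - P (k (P u))), klam l u - P (k (P u))⟫_ℝ) := by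
    intro n
    obtain ⟨l, hl, u, h1, h2⟩ := hcon ((n : ℝ) + 1) (by positivity)
    exact ⟨l, hl, u, h1, h2⟩
  choose l hl u hu1 hu2 using H
  have hlpos : ∀ n, (0 : ℝ) < l n := fun n =>
    lt_of_lt_of_le (by positivity) (hl n)
  have hAulim : A ulim = 0 := (hKer ulim).1 hulim
  -- basic facts on the quadratic form
  have hQnonneg : ∀ (s : ℝ) (v : E), 0 ≤ s → 0 ≤ ‖v‖ ^ 2 + s * ⟪A v, v⟫_ℝ := fun s v hs =>
    add_nonneg (by positivity) (mul_nonneg hs (hA_pos v))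
  have sqrt_le_elim : ∀ a b : ℝ, 0 ≤ a → Real.sqrt a ≤ b → a ≤ b ^ 2 := by
    intro a b ha h
    nlinarith [Real.sq_sqrt ha, Real.sqrt_nonneg a]
  have h1' : ∀ n, ‖u n - ulim‖ ^ 2 + l n * ⟪A (u n - ulim), u n - ulim⟫_ℝ ≤ δ ^ 2 :=
    fun n => sqrt_le_elim _ _ (hQnonneg _ _ (hlpos n).le) (hu1 n)
  have hnormd : ∀ n, ‖u n - ulim‖ ≤ δ := by
    intro n
    nlinarith [h1' n, mul_nonneg (hlpos n).le (hA_pos (u n - ulim)), norm_nonneg (u n - ulim)]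
  have hlA : ∀ n, l n * ⟪A (u n - ulim), u n - ulim⟫_ℝ ≤ δ ^ 2 := by
    intro n
    nlinarith [h1' n, sq_nonneg ‖u n - ulim‖]
  have hAuu : ∀ n, ⟪A (u n), u n⟫_ℝ = ⟪A (u n - ulim), u n - ulim⟫_ℝ := by
    intro n
    have e1 : A (u n - ulim) = A (u n) := by rw [map_sub, hAulim, sub_zero]
    have e2 : ⟪A (u n), ulim⟫_ℝ = 0 := by rw [hA_sa, hAulim, inner_zero_right]
    rw [e1, inner_sub_right, e2, sub_zero]
  have hu_norm_bd : ∀ n, ‖u n‖ ≤ δ + ‖ulim‖ := by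
    intro n
    calc ‖u n‖ = ‖(u n - ulim) + ulim‖ := by rw [sub_add_cancel]
      _ ≤ ‖u n - ulim‖ + ‖ulim‖ := norm_add_le _ _
      _ ≤ δ + ‖ulim‖ := by linarith [hnormd n]
  set Cb : ℝ := Real.sqrt ((δ + ‖ulim‖) ^ 2 + δ ^ 2) with hCb
  have hBnd : ∀ n, Real.sqrt (‖u n‖ ^ 2 + l n * ⟪A (u n), u n⟫_ℝ) ≤ Cb := by
    intro n
    apply Real.sqrt_le_sqrt
    have h1 : ‖u n‖ ^ 2 ≤ (δ + ‖ulim‖) ^ 2 :=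
      pow_le_pow_left₀ (norm_nonneg _) (hu_norm_bd n) 2
    have h2 : l n * ⟪A (u n), u n⟫_ℝ ≤ δ ^ 2 := by rw [hAuu n]; exact hlA n
    linarith
  -- squeeze helper
  have hsqueeze : ∀ (c : ℝ) (f : ℕ → ℝ), (∀ n, 0 ≤ f n) →
      (∀ n : ℕ, ((n : ℝ) + 1) * f n ≤ c) → Tendsto f atTop (nhds 0) := by
    intro c f h0 hb
    have hg : Tendsto (fun n : ℕ => c * (1 / ((n : ℝ) + 1))) atTop (nhds 0) := by
      simpa using tendsto_one_div_add_atTop_nhds_zero_nat.const_mul c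
    refine squeeze_zero h0 (fun n => ?_) hg
    have hnp : (0 : ℝ) < (n : ℝ) + 1 := by positivity
    rw [mul_one_div, le_div_iff₀ hnp]
    calc f n * ((n : ℝ) + 1) = ((n : ℝ) + 1) * f n := by ring
      _ ≤ c := hb n
  -- first weak limit
  obtain ⟨φ, hφ, ul, hweak⟩ := aux_weak_bw u (δ + ‖ulim‖) hu_norm_bd
  have hφle : ∀ n : ℕ, (n : ℝ) ≤ (φ n : ℝ) := fun n => Nat.cast_le.2 hφ.le_apply
  have hlφ : ∀ n : ℕ, (n : ℝ) + 1 ≤ l (φ n) := fun n =>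
    le_trans (by linarith [hφle n]) (hl (φ n))
  have hlim_tends : Tendsto (fun n => l (φ n)) atTop atTop := by
    refine tendsto_atTop_mono hlφ ?_
    exact tendsto_atTop_add_const_right _ 1 tendsto_natCast_atTop_atTop
  -- the weak limit is in the kernel K
  have hAd_lim : Tendsto (fun n => ⟪A (u (φ n) - ulim), u (φ n) - ulim⟫_ℝ) atTop (nhds 0) := by
    refine hsqueeze (δ ^ 2) _ (fun n => hA_pos _) (fun n => ?_)
    have h1 := hlA (φ n)
    have h2 := hlφ n
    nlinarith [hA_pos (u (φ n) - ulim)]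
  have hdweak : ∀ w : E, Tendsto (fun n => ⟪u (φ n) - ulim, w⟫_ℝ) atTop
      (nhds ⟪ul - ulim, w⟫_ℝ) := by
    intro w
    have := (hweak w).sub_const ⟪ulim, w⟫_ℝ
    simpa [inner_sub_left] using this
  have hAdl : A (ul - ulim) = 0 :=
    aux_wlsc A hA_sa hA_pos (fun n => u (φ n) - ulim) (ul - ulim) hdweak hAd_lim
  have hulK : ul ∈ K := by
    have : ul = (ul - ulim) + ulim := by abel
    rw [this]
    exact K.add_mem ((hKer _).2 hAdl) hulim
  have hPul : P ul = ul := hP_id _ hulK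
  -- first application of (J₃)
  have hk1 : Tendsto (fun n => k (u (φ n))) atTop (nhds (k ul)) :=
    hJ3 (fun n => l (φ n)) (fun n => u (φ n)) ul Cb hlim_tends (fun n => hBnd (φ n)) hweak
  -- the projection is a contraction
  have hPP : ∀ v : E, P (P v) = P v := fun v => hP_id _ (hP_mem v)
  have hPnorm : ∀ v : E, ‖P v‖ ≤ ‖v‖ := by
    intro v
    have h1 : ‖P v‖ ^ 2 = ⟪v, P v⟫_ℝ := by
      rw [← real_inner_self_eq_norm_sq, hP_sa, hPP]
    have h2 : ⟪v, P v⟫_ℝ ≤ ‖v‖ * ‖P v‖ := real_inner_le_norm _ _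
    nlinarith [norm_nonneg (P v), norm_nonneg v]
  have hAP : ∀ v : E, A (P v) = 0 := fun v => (hKer _).1 (hP_mem v)
  -- second application of (J₃), to the projected sequence
  have hPBnd : ∀ n, Real.sqrt (‖P (u n)‖ ^ 2
      + l n * ⟪A (P (u n)), P (u n)⟫_ℝ) ≤ Cb := by
    intro n
    rw [hAP, inner_zero_left, mul_zero, add_zero, Real.sqrt_sq (norm_nonneg _)]
    have h1 : ‖P (u n)‖ ≤ δ + ‖ulim‖ := le_trans (hPnorm _) (hu_norm_bd n)
    have h2 : δ + ‖ulim‖ ≤ Cb := by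
      have h3 : Real.sqrt ((δ + ‖ulim‖) ^ 2) ≤ Cb := by
        rw [hCb]
        exact Real.sqrt_le_sqrt (by nlinarith [hδ])
      rwa [Real.sqrt_sq (by positivity)] at h3
    linarith
  have hPweak : ∀ w : E, Tendsto (fun n => ⟪P (u (φ n)), w⟫_ℝ) atTop (nhds ⟪ul, w⟫_ℝ) := by
    intro w
    have h1 := hweak (P w)
    have e : ⟪ul, P w⟫_ℝ = ⟪ul, w⟫_ℝ := by rw [← hP_sa, hPul]
    rw [e] at h1
    exact h1.congr fun n => (hP_sa _ _).symm
  have hk2 : Tendsto (fun n => k (P (u (φ n)))) atTop (nhds (k ul)) :=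
    hJ3 (fun n => l (φ n)) (fun n => P (u (φ n))) ul Cb hlim_tends
      (fun n => hPBnd (φ n)) hPweak
  -- the defect sequence
  set wseq : ℕ → E := fun n => klam (l (φ n)) (u (φ n)) - P (k (P (u (φ n)))) with hwseq
  -- key identity
  have hQid : ∀ n, ‖wseq n‖ ^ 2 + l (φ n) * ⟪A (wseq n), wseq n⟫_ℝ
      = ⟪k (u (φ n)) - P (k (P (u (φ n)))), wseq n⟫_ℝ := by
    intro n
    have hAb : A (P (k (P (u (φ n))))) = 0 := hAP _
    have e1 : ‖wseq n‖ ^ 2 = ⟪klam (l (φ n)) (u (φ n)), wseq n⟫_ℝ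
        - ⟪P (k (P (u (φ n)))), wseq n⟫_ℝ := by
      rw [← real_inner_self_eq_norm_sq]
      conv_lhs => rw [hwseq]
      rw [inner_sub_left]
    have e2 : ⟪A (wseq n), wseq n⟫_ℝ = ⟪A (klam (l (φ n)) (u (φ n))), wseq n⟫_ℝ := by
      conv_lhs => rw [hwseq]
      rw [map_sub, hAb, sub_zero]
    have e3 := hrep (l (φ n)) (hlpos (φ n)).le (u (φ n)) (wseq n)
    rw [inner_sub_left, e1, e2]
    linarith
  -- uniform bound on the defect sequence
  obtain ⟨M₁, hM₁⟩ := hk1.norm.bddAbove_range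
  obtain ⟨M₂, hM₂⟩ := hk2.norm.bddAbove_range
  have hM₁' : ∀ n, ‖k (u (φ n))‖ ≤ M₁ := fun n => hM₁ (Set.mem_range_self n)
  have hM₂' : ∀ n, ‖k (P (u (φ n)))‖ ≤ M₂ := fun n => hM₂ (Set.mem_range_self n)
  set M : ℝ := M₁ + M₂ with hM
  have hMbd : ∀ n, ‖k (u (φ n)) - P (k (P (u (φ n))))‖ ≤ M := by
    intro n
    calc ‖k (u (φ n)) - P (k (P (u (φ n))))‖
        ≤ ‖k (u (φ n))‖ + ‖P (k (P (u (φ n))))‖ := norm_sub_le _ _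
      _ ≤ M₁ + M₂ := add_le_add (hM₁' n) (le_trans (hPnorm _) (hM₂' n))
  have hM0 : 0 ≤ M := le_trans (norm_nonneg _) (hMbd 0)
  have hwnorm : ∀ n, ‖wseq n‖ ≤ M := by
    intro n
    have hq := hQid n
    have h1 : ⟪k (u (φ n)) - P (k (P (u (φ n)))), wseq n⟫_ℝ ≤ M * ‖wseq n‖ := by
      refine le_trans (real_inner_le_norm _ _) ?_
      exact mul_le_mul_of_nonneg_right (hMbd n) (norm_nonneg _)
    have hMw : ‖wseq n‖ * ‖wseq n‖ ≤ M * ‖wseq n‖ := by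
      nlinarith [mul_nonneg (hlpos (φ n)).le (hA_pos (wseq n))]
    rcases eq_or_lt_of_le (norm_nonneg (wseq n)) with h | h
    · rw [← h]; exact hM0
    · exact le_of_mul_le_mul_right hMw h
  -- the A-energy of the defect sequence tends to zero
  have hAw0 : Tendsto (fun n => ⟪A (wseq n), wseq n⟫_ℝ) atTop (nhds 0) := by
    refine hsqueeze (M * M) _ (fun n => hA_pos _) (fun n => ?_)
    have hq := hQid n
    have h1 : ⟪k (u (φ n)) - P (k (P (u (φ n)))), wseq n⟫_ℝ ≤ M * M := by
      refine le_trans (real_inner_le_norm _ _) ?_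
      have hM0 : 0 ≤ M := le_trans (norm_nonneg _) (hMbd n)
      exact mul_le_mul (hMbd n) (hwnorm n) (norm_nonneg _) hM0
    have h2 := hlφ n
    nlinarith [hA_pos (wseq n), sq_nonneg ‖wseq n‖]
  -- second weak limit
  obtain ⟨ψ, hψ, wl, hwweak⟩ := aux_weak_bw wseq M hwnorm
  have hAwl : A wl = 0 := by
    refine aux_wlsc A hA_sa hA_pos (fun n => wseq (ψ n)) wl hwweak ?_
    exact hAw0.comp hψ.tendsto_atTop
  have hwlK : wl ∈ K := (hKer _).2 hAwl
  -- strong convergence of the pairing sequence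
  have hstrong : Tendsto (fun n => k (u (φ (ψ n))) - P (k (P (u (φ (ψ n))))))
      atTop (nhds (k ul - P (k ul))) := by
    have h1 : Tendsto (fun n => k (u (φ (ψ n)))) atTop (nhds (k ul)) :=
      hk1.comp hψ.tendsto_atTop
    have h2 : Tendsto (fun n => P (k (P (u (φ (ψ n)))))) atTop (nhds (P (k ul))) :=
      (P.continuous.tendsto _).comp (hk2.comp hψ.tendsto_atTop)
    exact h1.sub h2
  have hfinal : Tendsto (fun n => ⟪k (u (φ (ψ n))) - P (k (P (u (φ (ψ n))))), wseq (ψ n)⟫_ℝ)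
      atTop (nhds ⟪k ul - P (k ul), wl⟫_ℝ) :=
    aux_inner_tendsto _ _ _ _ M (fun n => hwnorm (ψ n)) hstrong hwweak
  have hzero : ⟪k ul - P (k ul), wl⟫_ℝ = 0 := by
    rw [inner_sub_left, hP_sa (k ul) wl, hP_id wl hwlK, sub_self]
  rw [hzero] at hfinal
  have hQ0 : Tendsto (fun n => ‖wseq (ψ n)‖ ^ 2
      + l (φ (ψ n)) * ⟪A (wseq (ψ n)), wseq (ψ n)⟫_ℝ) atTop (nhds 0) :=
    hfinal.congr fun n => (hQid (ψ n)).symm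
  -- contradiction
  have hlower : ∀ n, ε ^ 2 ≤ ‖wseq (ψ n)‖ ^ 2
      + l (φ (ψ n)) * ⟪A (wseq (ψ n)), wseq (ψ n)⟫_ℝ := by
    intro n
    have h := hu2 (φ (ψ n))
    have hQn : 0 ≤ ‖wseq (ψ n)‖ ^ 2 + l (φ (ψ n)) * ⟪A (wseq (ψ n)), wseq (ψ n)⟫_ℝ :=
      hQnonneg _ _ (hlpos (φ (ψ n))).le
    have he : wseq (ψ n) = klam (l (φ (ψ n))) (u (φ (ψ n)))
        - P (k (P (u (φ (ψ n))))) := by rw [hwseq]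
    rw [he]
    rw [he] at hQn
    nlinarith [Real.sq_sqrt hQn, h, hε]
  have : ε ^ 2 ≤ 0 := le_of_tendsto_of_tendsto' tendsto_const_nhds hQ0 hlower
  nlinarith [hε]
end

section
/- Let E be a real Hilbert space, A bounded self-adjoint positive semidefinite with E_∞ = ker A, P the orthogonal projection onto E_∞, and k : E → E a map which is Fréchet differentiable at u_∞ ∈ E_∞ and satisfies: whenever λₙ → ∞, (uₙ) with sup‖uₙ‖_{λₙ} < ∞ and uₙ ⇀ u, then Dk(u_∞)[uₙ] → Dk(u_∞)[u] strongly. Then ‖Dk_λ(u_∞) − (Dk_∞(u_∞))∘P‖_λ → 0 as λ → ∞, where Dk_λ(u_∞) is the ⟨·,·⟩_λ-representative of Dk(u_∞) (i.e., ⟨Dk_λ(u_∞)v, w⟩_λ = ⟨Dk(u_∞)v, w⟩) and Dk_∞(u_∞) = P∘Dk(u_∞)|_{E_∞}. -/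
/-!
Argue by contradiction: there are `λₙ → ∞` and `‖vₙ‖_{λₙ} ≤ 1` with `‖dₙ‖_{λₙ} > ε`, where
`dₙ = Dk_{λₙ}vₙ - P T P vₙ`. Since `P T P vₙ ∈ ker A`, the representation identity gives
`‖dₙ‖_{λₙ}² = ⟪T vₙ - P T P vₙ, dₙ⟫`, so `dₙ` is bounded. Pass to weakly convergent subsequences
`vₙ ⇀ v₀`, `dₙ ⇀ d₀`; as `λₙ ⟪A ·, ·⟫` stays bounded, both limits lie in `ker A`. Condition (J₅)
makes `T vₙ → T v₀` and `T (P vₙ) → T v₀` strongly, hence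
`‖dₙ‖_{λₙ}² → ⟪T v₀ - P T v₀, d₀⟫ = ⟪T v₀, d₀ - P d₀⟫ = 0`.
-/

open scoped InnerProductSpace
open Filter Topology

section

variable {E : Type*} [NormedAddCommGroup E] [InnerProductSpace ℝ E]

def WeakTendsto (u : ℕ → E) (u₀ : E) : Prop :=
  ∀ w : E, Tendsto (fun n => ⟪u n, w⟫_ℝ) atTop (𝓝 ⟪u₀, w⟫_ℝ)

/-- Sequential Banach–Alaoglu, applied in the closed span of the sequence, which is separable. -/
theorem exists_weakTendsto_subseq [CompleteSpace E] {u : ℕ → E} {C : ℝ} (hu : ∀ n, ‖u n‖ ≤ C) :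
    ∃ (u₀ : E) (φ : ℕ → ℕ), StrictMono φ ∧ WeakTendsto (u ∘ φ) u₀ := by
  set S : Submodule ℝ E := (Submodule.span ℝ (Set.range u)).topologicalClosure
  have : CompleteSpace S := (Submodule.isClosed_topologicalClosure _).completeSpace_coe
  have : TopologicalSpace.SeparableSpace S :=
    (Set.countable_range u).isSeparable.span.closure.separableSpace
  have huS (n : ℕ) : u n ∈ S :=
    Submodule.le_topologicalClosure _ (Submodule.subset_span ⟨n, rfl⟩)
  let f (n : ℕ) : StrongDual ℝ S := InnerProductSpace.toDual ℝ S ⟨u n, huS n⟩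
  have hf (n : ℕ) :
      StrongDual.toWeakDual (f n) ∈ WeakDual.toStrongDual ⁻¹' Metric.closedBall 0 C :=
    (dist_zero_right (f n)).le.trans ((LinearIsometryEquiv.norm_map _ _).trans_le (hu n))
  obtain ⟨x, -, φ, hφ, hx⟩ := WeakDual.isSeqCompact_closedBall ℝ S 0 C hf
  refine ⟨(InnerProductSpace.toDual ℝ S).symm (WeakDual.toStrongDual x), φ, hφ, fun w => ?_⟩
  have := ((WeakDual.eval_continuous (S.orthogonalProjectionOnto w)).tendsto x).comp hx
  convert this using 1
  · ext n
    simp [f]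
  · rw [← Submodule.inner_orthogonalProjectionOnto_eq_of_mem_left,
      InnerProductSpace.toDual_symm_apply]
    rfl

namespace WeakTendsto

variable {u : ℕ → E} {u₀ : E}

theorem comp_strictMono (h : WeakTendsto u u₀) {φ : ℕ → ℕ} (hφ : StrictMono φ) :
    WeakTendsto (u ∘ φ) u₀ :=
  fun w => (h w).comp hφ.tendsto_atTop

theorem map_of_symmetric {P : E →L[ℝ] E} (hP : ∀ x y : E, ⟪P x, y⟫_ℝ = ⟪x, P y⟫_ℝ)
    (h : WeakTendsto u u₀) : WeakTendsto (fun n => P (u n)) (P u₀) :=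
  fun w => by simpa only [hP] using h (P w)

theorem tendsto_inner_of_tendsto (h : WeakTendsto u u₀) {C : ℝ} (hC : ∀ n, ‖u n‖ ≤ C)
    {a : ℕ → E} {a₀ : E} (ha : Tendsto a atTop (𝓝 a₀)) :
    Tendsto (fun n => ⟪a n, u n⟫_ℝ) atTop (𝓝 ⟪a₀, u₀⟫_ℝ) := by
  have hsmall : Tendsto (fun n => ⟪a n - a₀, u n⟫_ℝ) atTop (𝓝 0) := by
    refine squeeze_zero_norm (fun n => ?_)
      (by simpa using (tendsto_iff_norm_sub_tendsto_zero.mp ha).mul_const C)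
    exact (norm_inner_le_norm _ _).trans (mul_le_mul_of_nonneg_left (hC n) (norm_nonneg _))
  have hfixed : Tendsto (fun n => ⟪a₀, u n⟫_ℝ) atTop (𝓝 ⟪a₀, u₀⟫_ℝ) := by
    simpa only [real_inner_comm a₀] using h a₀
  simpa [inner_sub_left] using hsmall.add hfixed

end WeakTendsto

section PositiveOperator

variable {A : E →L[ℝ] E}

theorem sq_inner_map_le_mul (hA_sa : ∀ u v : E, ⟪A u, v⟫_ℝ = ⟪u, A v⟫_ℝ)
    (hA_pos : ∀ u : E, 0 ≤ ⟪A u, u⟫_ℝ) (x y : E) :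
    ⟪A x, y⟫_ℝ ^ 2 ≤ ⟪A x, x⟫_ℝ * ⟪A y, y⟫_ℝ := by
  have hyx : ⟪A y, x⟫_ℝ = ⟪A x, y⟫_ℝ := by rw [hA_sa, real_inner_comm]
  have hd : discrim ⟪A y, y⟫_ℝ (2 * ⟪A x, y⟫_ℝ) ⟪A x, x⟫_ℝ ≤ 0 := by
    refine discrim_le_zero fun t => ?_
    have h := hA_pos (x + t • y)
    simp only [map_add, map_smul, inner_add_left, inner_add_right, real_inner_smul_left,
      real_inner_smul_right, hyx] at h
    linarith
  rw [discrim] at hd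
  linarith

theorem WeakTendsto.map_eq_zero (hA_sa : ∀ u v : E, ⟪A u, v⟫_ℝ = ⟪u, A v⟫_ℝ)
    (hA_pos : ∀ u : E, 0 ≤ ⟪A u, u⟫_ℝ) {z : ℕ → E} {z₀ : E} (h : WeakTendsto z z₀)
    (hz : Tendsto (fun n => ⟪A (z n), z n⟫_ℝ) atTop (𝓝 0)) : A z₀ = 0 := by
  have hlim : Tendsto (fun n => ⟪A (z n), A z₀⟫_ℝ) atTop (𝓝 ⟪A z₀, A z₀⟫_ℝ) := by
    simpa only [hA_sa] using h (A (A z₀))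
  have hzero : Tendsto (fun n => ⟪A (z n), A z₀⟫_ℝ) atTop (𝓝 0) := by
    refine squeeze_zero_norm (fun n => Real.abs_le_sqrt (sq_inner_map_le_mul hA_sa hA_pos _ _))
      ?_
    simpa using (hz.mul_const ⟪A (A z₀), A z₀⟫_ℝ).sqrt
  exact inner_self_eq_zero.mp (tendsto_nhds_unique hlim hzero)

end PositiveOperator

/-- The paper's `‖x‖_λ²`. -/
def lamNormSq (A : E →L[ℝ] E) (l : ℝ) (x : E) : ℝ :=
  ‖x‖ ^ 2 + l * ⟪A x, x⟫_ℝ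

section lamNormSq

variable {A : E →L[ℝ] E} {l : ℝ}

theorem norm_sq_le_lamNormSq (hA_pos : ∀ u : E, 0 ≤ ⟪A u, u⟫_ℝ) (hl : 0 ≤ l) (x : E) :
    ‖x‖ ^ 2 ≤ lamNormSq A l x :=
  le_add_of_nonneg_right (mul_nonneg hl (hA_pos x))

theorem lamNormSq_nonneg (hA_pos : ∀ u : E, 0 ≤ ⟪A u, u⟫_ℝ) (hl : 0 ≤ l) (x : E) :
    0 ≤ lamNormSq A l x :=
  (sq_nonneg _).trans (norm_sq_le_lamNormSq hA_pos hl x)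

theorem norm_le_sqrt_lamNormSq (hA_pos : ∀ u : E, 0 ≤ ⟪A u, u⟫_ℝ) (hl : 0 ≤ l) (x : E) :
    ‖x‖ ≤ √(lamNormSq A l x) :=
  (Real.le_sqrt (norm_nonneg x) (lamNormSq_nonneg hA_pos hl x)).mpr
    (norm_sq_le_lamNormSq hA_pos hl x)

theorem lamNormSq_smul (a : ℝ) (x : E) : lamNormSq A l (a • x) = a ^ 2 * lamNormSq A l x := by
  simp only [lamNormSq, map_smul, norm_smul, real_inner_smul_left, real_inner_smul_right,
    Real.norm_eq_abs, mul_pow, sq_abs]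
  ring

theorem lamNormSq_of_map_eq_zero {x : E} (hx : A x = 0) : lamNormSq A l x = ‖x‖ ^ 2 := by
  simp [lamNormSq, hx]

theorem tendsto_inner_map_self_of_lamNormSq_le (hA_pos : ∀ u : E, 0 ≤ ⟪A u, u⟫_ℝ)
    {lam : ℕ → ℝ} (hlam : Tendsto lam atTop atTop) {x : ℕ → E} {C : ℝ}
    (hx : ∀ n, lamNormSq A (lam n) (x n) ≤ C) :
    Tendsto (fun n => ⟪A (x n), x n⟫_ℝ) atTop (𝓝 0) := by
  refine squeeze_zero' (Eventually.of_forall fun n => hA_pos (x n)) ?_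
    ((tendsto_const_nhds (x := C)).div_atTop hlam)
  filter_upwards [hlam.eventually_gt_atTop 0] with n hn
  rw [le_div_iff₀ hn, mul_comm]
  exact (le_add_of_nonneg_left (sq_nonneg _)).trans (hx n)

theorem lamNormSq_sub_eq_inner {s t y : E}
    (hs : ∀ w : E, ⟪s, w⟫_ℝ + l * ⟪A s, w⟫_ℝ = ⟪t, w⟫_ℝ) (hy : A y = 0) :
    lamNormSq A l (s - y) = ⟪t - y, s - y⟫_ℝ := by
  have h := hs (s - y)
  rw [lamNormSq, ← real_inner_self_eq_norm_sq, map_sub, hy, sub_zero]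
  rw [inner_sub_left t, ← h, inner_sub_left s y (s - y)]
  ring

theorem sqrt_lamNormSq_le_of_eq_inner (hA_pos : ∀ u : E, 0 ≤ ⟪A u, u⟫_ℝ) (hl : 0 ≤ l)
    (B : E →L[ℝ] E) {x d : E} (h : lamNormSq A l d = ⟪B x, d⟫_ℝ) :
    √(lamNormSq A l d) ≤ ‖B‖ * √(lamNormSq A l x) := by
  set s := √(lamNormSq A l d)
  have hs : s * s ≤ ‖B‖ * √(lamNormSq A l x) * s :=
    calc s * s = ⟪B x, d⟫_ℝ := by rw [Real.mul_self_sqrt (lamNormSq_nonneg hA_pos hl d), h]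
      _ ≤ ‖B x‖ * ‖d‖ := real_inner_le_norm _ _
      _ ≤ ‖B‖ * √(lamNormSq A l x) * s := by
        gcongr
        · exact (B.le_opNorm x).trans (by gcongr; exact norm_le_sqrt_lamNormSq hA_pos hl x)
        · exact norm_le_sqrt_lamNormSq hA_pos hl d
  by_cases hs0 : s = 0
  · rw [hs0]
    positivity
  · exact le_of_mul_le_mul_right hs ((Real.sqrt_nonneg _).lt_of_ne' hs0)

theorem exists_lamNormSq_le_one_of_lt (hA_pos : ∀ u : E, 0 ≤ ⟪A u, u⟫_ℝ) (hl : 0 ≤ l)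
    (D : E →L[ℝ] E) {ε : ℝ} (hε : 0 ≤ ε) {u : E}
    (hu : ε * √(lamNormSq A l u) < √(lamNormSq A l (D u))) :
    ∃ v : E, lamNormSq A l v ≤ 1 ∧ ε ^ 2 < lamNormSq A l (D v) := by
  have hc : 0 < √(lamNormSq A l u) := by
    refine (Real.sqrt_nonneg _).lt_of_ne fun hc0 => ?_
    have hu0 : u = 0 := norm_le_zero_iff.mp (hc0 ▸ norm_le_sqrt_lamNormSq hA_pos hl u)
    simp [hu0, lamNormSq] at hu
  set c := √(lamNormSq A l u)
  have hDu : (ε * c) ^ 2 < lamNormSq A l (D u) := (Real.lt_sqrt (by positivity)).mp hu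
  refine ⟨c⁻¹ • u, ?_, ?_⟩
  · rw [lamNormSq_smul, ← Real.sq_sqrt (lamNormSq_nonneg hA_pos hl u), inv_pow,
      inv_mul_cancel₀ (by positivity)]
  · rw [map_smul, lamNormSq_smul, inv_pow, ← div_eq_inv_mul, lt_div_iff₀ (by positivity)]
    linarith [mul_pow ε c 2]

end lamNormSq

section Contraction

variable {A P T : E →L[ℝ] E}

theorem tendsto_sub_comp_of_weakTendsto
    (hJ5 : ∀ (lam : ℕ → ℝ) (v : ℕ → E) (v₀ : E) (Cb : ℝ), Tendsto lam atTop atTop →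
      (∀ n, √(lamNormSq A (lam n) (v n)) ≤ Cb) → WeakTendsto v v₀ →
      Tendsto (fun n => T (v n)) atTop (𝓝 (T v₀)))
    (hA_pos : ∀ u : E, 0 ≤ ⟪A u, u⟫_ℝ) (hAP : ∀ u, A (P u) = 0)
    (hP_sa : ∀ u v : E, ⟪P u, v⟫_ℝ = ⟪u, P v⟫_ℝ)
    {lam : ℕ → ℝ} (hlam : Tendsto lam atTop atTop) (hlam0 : ∀ n, 0 ≤ lam n)
    {v : ℕ → E} {v₀ : E} (hv : ∀ n, lamNormSq A (lam n) (v n) ≤ 1) (hvv₀ : WeakTendsto v v₀)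
    (hPv₀ : P v₀ = v₀) :
    Tendsto (fun n => T (v n) - P (T (P (v n)))) atTop (𝓝 (T v₀ - P (T v₀))) := by
  have hbound (n : ℕ) : √(lamNormSq A (lam n) (P (v n))) ≤ ‖P‖ := by
    rw [lamNormSq_of_map_eq_zero (hAP _), Real.sqrt_sq (norm_nonneg _)]
    refine (P.le_opNorm _).trans (mul_le_of_le_one_right (norm_nonneg _) ?_)
    exact (norm_le_sqrt_lamNormSq hA_pos (hlam0 n) _).trans (Real.sqrt_le_one.mpr (hv n))
  have hTP := hJ5 lam (fun n => P (v n)) v₀ ‖P‖ hlam hbound (hPv₀ ▸ hvv₀.map_of_symmetric hP_sa)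
  have hT := hJ5 lam v v₀ 1 hlam (fun n => Real.sqrt_le_one.mpr (hv n)) hvv₀
  exact hT.sub ((P.continuous.tendsto _).comp hTP)

theorem exists_subseq_tendsto_lamNormSq_zero [CompleteSpace E]
    (hA_sa : ∀ u v : E, ⟪A u, v⟫_ℝ = ⟪u, A v⟫_ℝ) (hA_pos : ∀ u : E, 0 ≤ ⟪A u, u⟫_ℝ)
    (hAP : ∀ u, A (P u) = 0) (hP_fix : ∀ u, A u = 0 → P u = u)
    (hP_sa : ∀ u v : E, ⟪P u, v⟫_ℝ = ⟪u, P v⟫_ℝ)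
    (hJ5 : ∀ (lam : ℕ → ℝ) (v : ℕ → E) (v₀ : E) (Cb : ℝ), Tendsto lam atTop atTop →
      (∀ n, √(lamNormSq A (lam n) (v n)) ≤ Cb) → WeakTendsto v v₀ →
      Tendsto (fun n => T (v n)) atTop (𝓝 (T v₀)))
    {Tlam : ℝ → E →L[ℝ] E}
    (hrep : ∀ l : ℝ, 0 ≤ l → ∀ v w : E,
      ⟪Tlam l v, w⟫_ℝ + l * ⟪A (Tlam l v), w⟫_ℝ = ⟪T v, w⟫_ℝ)
    {lam : ℕ → ℝ} (hlam : Tendsto lam atTop atTop) (hlam0 : ∀ n, 0 ≤ lam n)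
    {v : ℕ → E} (hv : ∀ n, lamNormSq A (lam n) (v n) ≤ 1) :
    ∃ φ : ℕ → ℕ, StrictMono φ ∧ Tendsto (fun n => lamNormSq A (lam (φ n))
      (Tlam (lam (φ n)) (v (φ n)) - P (T (P (v (φ n)))))) atTop (𝓝 0) := by
  set d : ℕ → E := fun n => Tlam (lam n) (v n) - P (T (P (v n)))
  have hd_eq (n : ℕ) : lamNormSq A (lam n) (d n) = ⟪T (v n) - P (T (P (v n))), d n⟫_ℝ :=
    lamNormSq_sub_eq_inner (hrep _ (hlam0 n) (v n)) (hAP _)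
  have hd_sqrt (n : ℕ) : √(lamNormSq A (lam n) (d n)) ≤ ‖T - P ∘L T ∘L P‖ :=
    (sqrt_lamNormSq_le_of_eq_inner hA_pos (hlam0 n) (T - P ∘L T ∘L P) (hd_eq n)).trans
      (mul_le_of_le_one_right (norm_nonneg _) (Real.sqrt_le_one.mpr (hv n)))
  have hd_sq (n : ℕ) : lamNormSq A (lam n) (d n) ≤ ‖T - P ∘L T ∘L P‖ ^ 2 :=
    (Real.sqrt_le_iff.mp (hd_sqrt n)).2
  have hv_norm (n : ℕ) : ‖v n‖ ≤ 1 :=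
    (norm_le_sqrt_lamNormSq hA_pos (hlam0 n) _).trans (Real.sqrt_le_one.mpr (hv n))
  have hd_norm (n : ℕ) : ‖d n‖ ≤ ‖T - P ∘L T ∘L P‖ :=
    (norm_le_sqrt_lamNormSq hA_pos (hlam0 n) _).trans (hd_sqrt n)
  obtain ⟨v₀, φ₁, hφ₁, hv₀⟩ := exists_weakTendsto_subseq hv_norm
  obtain ⟨d₀, φ₂, hφ₂, hd₀⟩ := exists_weakTendsto_subseq fun n => hd_norm (φ₁ n)
  have hv₀' : WeakTendsto (v ∘ φ₁ ∘ φ₂) v₀ := hv₀.comp_strictMono hφ₂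
  have hlam' : Tendsto (lam ∘ φ₁ ∘ φ₂) atTop atTop := hlam.comp (hφ₁.comp hφ₂).tendsto_atTop
  have hAv₀ : A v₀ = 0 := hv₀'.map_eq_zero hA_sa hA_pos
    (tendsto_inner_map_self_of_lamNormSq_le hA_pos hlam' fun n => hv _)
  have hAd₀ : A d₀ = 0 := hd₀.map_eq_zero hA_sa hA_pos
    (tendsto_inner_map_self_of_lamNormSq_le hA_pos hlam' fun n => hd_sq _)
  have hlim := hd₀.tendsto_inner_of_tendsto (fun n => hd_norm _)
    (tendsto_sub_comp_of_weakTendsto hJ5 hA_pos hAP hP_sa hlam' (fun n => hlam0 _)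
      (fun n => hv _) hv₀' (hP_fix v₀ hAv₀))
  have hzero : ⟪T v₀ - P (T v₀), d₀⟫_ℝ = 0 := by
    rw [inner_sub_left, hP_sa, hP_fix d₀ hAd₀, sub_self]
  refine ⟨φ₁ ∘ φ₂, hφ₁.comp hφ₂, ?_⟩
  rw [hzero] at hlim
  exact hlim.congr fun n => (hd_eq _).symm

end Contraction

end

theorem stmt_19_general {E : Type*} [NormedAddCommGroup E] [InnerProductSpace ℝ E] [CompleteSpace E]
    (A : E →L[ℝ] E)
    (hA_sa : ∀ u v : E, ⟪A u, v⟫_ℝ = ⟪u, A v⟫_ℝ)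
    (hA_pos : ∀ u : E, 0 ≤ ⟪A u, u⟫_ℝ)
    (K : Submodule ℝ E) (hKer : ∀ v : E, v ∈ K ↔ A v = 0)
    (P : E →L[ℝ] E)
    (hP_mem : ∀ u : E, P u ∈ K)
    (hP_id : ∀ u ∈ K, P u = u)
    (hP_sa : ∀ u v : E, ⟪P u, v⟫_ℝ = ⟪u, P v⟫_ℝ)
    (T : E →L[ℝ] E)
    -- condition (J₅)
    (hJ5 : ∀ (lam : ℕ → ℝ) (v : ℕ → E) (v₀ : E) (Cb : ℝ),
      Tendsto lam atTop atTop →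
      (∀ n, Real.sqrt (‖v n‖ ^ 2 + lam n * ⟪A (v n), v n⟫_ℝ) ≤ Cb) →
      (∀ w : E, Tendsto (fun n => ⟪v n, w⟫_ℝ) atTop (nhds ⟪v₀, w⟫_ℝ)) →
      Tendsto (fun n => T (v n)) atTop (nhds (T v₀)))
    (Tlam : ℝ → E →L[ℝ] E)
    (hrep : ∀ l : ℝ, 0 ≤ l → ∀ v w : E,
      ⟪Tlam l v, w⟫_ℝ + l * ⟪A (Tlam l v), w⟫_ℝ = ⟪T v, w⟫_ℝ) :
    ∀ ε > 0, ∃ Λ > 0, ∀ l ≥ Λ, ∀ v : E,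
      Real.sqrt (‖Tlam l v - P (T (P v))‖ ^ 2 +
          l * ⟪A (Tlam l v - P (T (P v))), Tlam l v - P (T (P v))⟫_ℝ) ≤
        ε * Real.sqrt (‖v‖ ^ 2 + l * ⟪A v, v⟫_ℝ) := by
  intro ε hε
  by_contra! hcon
  have hAP (u : E) : A (P u) = 0 := (hKer _).mp (hP_mem u)
  have hP_fix (u : E) (hu : A u = 0) : P u = u := hP_id u ((hKer u).mpr hu)
  choose lam hlam u hu using fun n : ℕ => hcon (n + 1) (by positivity)
  have hlam0 (n : ℕ) : 0 ≤ lam n := by linarith [hlam n, (n.cast_nonneg : (0 : ℝ) ≤ n)]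
  have hlam_top : Tendsto lam atTop atTop :=
    tendsto_atTop_mono (fun n => by linarith [hlam n]) tendsto_natCast_atTop_atTop
  choose v hv hεv using fun n => exists_lamNormSq_le_one_of_lt hA_pos (hlam0 n)
    (Tlam (lam n) - P ∘L T ∘L P) hε.le (hu n)
  obtain ⟨φ, -, hφ⟩ := exists_subseq_tendsto_lamNormSq_zero hA_sa hA_pos hAP hP_fix hP_sa hJ5
    hrep hlam_top hlam0 hv
  obtain ⟨n, hn⟩ := (hφ.eventually (gt_mem_nhds (pow_pos hε 2))).exists
  exact (hεv (φ n)).not_gt hn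

/-- Lemma 4.4 of the paper: under condition (J₅), the `λ`-operator norm of
`Dk_λ(u_∞) − Dk_∞(u_∞)∘P` tends to `0` as `λ → ∞`, where `Dk_λ(u_∞)` is the
`⟨·,·⟩_λ`-representative of `Dk(u_∞)` and `Dk_∞(u_∞) = P∘Dk(u_∞)|_{E_∞}`.
(The operator norm estimate is expressed pointwise in the `λ`-norm.) -/
theorem stmt_19 {E : Type*} [NormedAddCommGroup E] [InnerProductSpace ℝ E] [CompleteSpace E]
    (A : E →L[ℝ] E)
    (hA_sa : ∀ u v : E, ⟪A u, v⟫_ℝ = ⟪u, A v⟫_ℝ)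
    (hA_pos : ∀ u : E, 0 ≤ ⟪A u, u⟫_ℝ)
    (K : Submodule ℝ E) (hKer : ∀ v : E, v ∈ K ↔ A v = 0)
    (P : E →L[ℝ] E)
    (hP_mem : ∀ u : E, P u ∈ K)
    (hP_id : ∀ u ∈ K, P u = u)
    (hP_sa : ∀ u v : E, ⟪P u, v⟫_ℝ = ⟪u, P v⟫_ℝ)
    (k : E → E) (ulim : E) (hulim : ulim ∈ K)
    (T : E →L[ℝ] E) (hT : HasFDerivAt k T ulim)
    -- condition (J₅)
    (hJ5 : ∀ (lam : ℕ → ℝ) (v : ℕ → E) (v₀ : E) (Cb : ℝ),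
      Tendsto lam atTop atTop →
      (∀ n, Real.sqrt (‖v n‖ ^ 2 + lam n * ⟪A (v n), v n⟫_ℝ) ≤ Cb) →
      (∀ w : E, Tendsto (fun n => ⟪v n, w⟫_ℝ) atTop (nhds ⟪v₀, w⟫_ℝ)) →
      Tendsto (fun n => T (v n)) atTop (nhds (T v₀)))
    (Tlam : ℝ → E →L[ℝ] E)
    (hrep : ∀ l : ℝ, 0 ≤ l → ∀ v w : E,
      ⟪Tlam l v, w⟫_ℝ + l * ⟪A (Tlam l v), w⟫_ℝ = ⟪T v, w⟫_ℝ) :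
    ∀ ε > 0, ∃ Λ > 0, ∀ l ≥ Λ, ∀ v : E,
      Real.sqrt (‖Tlam l v - P (T (P v))‖ ^ 2 +
          l * ⟪A (Tlam l v - P (T (P v))), Tlam l v - P (T (P v))⟫_ℝ) ≤
        ε * Real.sqrt (‖v‖ ^ 2 + l * ⟪A v, v⟫_ℝ) :=
  stmt_19_general A hA_sa hA_pos K hKer P hP_mem hP_id hP_sa T hJ5 Tlam hrep
end
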